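/- Let k, l, m ∈ ℝ³ with l, m linearly independent, |l| ≠ |m|, l + m = k ≠ 0, and let G ∈ ℝ³ with G · k = 0. Then there exist X, Y ∈ ℝ³ with X · l = 0, Y · m = 0 and (m·X) P_k Y + (l·Y) P_k X + 2G = 0. -/

import Mathlib

/-!
Put `a = ‖l‖²`, `b = ‖m‖²`, `t = ⟪l, m⟫` and let `D = ab - t²`, positive by strict
Cauchy–Schwarz. Split `G = x l + y m + N` with `N ⊥ l, m`, and take `X = a m - t l`,
`Y = s (b l - t m) - N / D`. Then `m·X = D` and `l·Y = sD`, so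
`(m·X) Y + (l·Y) X + G ≡ s D (b - a) (l - m) / 2 + (x - y) (l - m) / 2` modulo `k = l + m`,
which vanishes for a suitable `s` because `a ≠ b`. Applying the linear map `P_k`, which kills
`k` and fixes `G ⊥ k`, gives the claim.
-/

open scoped RealInnerProductSpace

noncomputable section

/-- The orthogonal projection of `ℝ³` onto `k^⊥`. -/
def Pk (k η : EuclideanSpace ℝ (Fin 3)) : EuclideanSpace ℝ (Fin 3) :=
  η - ((⟪k, η⟫) / ‖k‖ ^ 2) • k

section
variable {E : Type*} [NormedAddCommGroup E] [InnerProductSpace ℝ E]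

theorem sq_real_inner_lt_of_linearIndependent {l m : E} (h : LinearIndependent ℝ ![l, m]) :
    ⟪l, m⟫ ^ 2 < ‖l‖ ^ 2 * ‖m‖ ^ 2 := by
  have hl : l ≠ 0 := by simpa using h.ne_zero 0
  have hm : m ≠ 0 := by simpa using h.ne_zero 1
  rw [← mul_pow, ← sq_abs]
  refine pow_lt_pow_left₀ ((abs_real_inner_le_norm l m).lt_of_ne fun heq => ?_) (abs_nonneg _)
    two_ne_zero
  obtain ⟨-, r, -, rfl⟩ := (abs_real_inner_div_norm_mul_norm_eq_one_iff l m).1 <| by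
    rw [abs_div, heq, abs_of_nonneg (by positivity), div_self (by positivity)]
  simpa using LinearIndependent.pair_iff.1 h r (-1) (by simp)

theorem exists_inner_sub_smul_add_smul_eq_zero (l m G : E) :
    ∃ x y : ℝ, ⟪G - (x • l + y • m), l⟫ = 0 ∧ ⟪G - (x • l + y • m), m⟫ = 0 := by
  set K := Submodule.span ℝ {l, m}
  have := FiniteDimensional.span_of_finite ℝ (Set.toFinite {l, m})
  obtain ⟨x, y, hxy⟩ := Submodule.mem_span_pair.1 (K.starProjection_apply_mem G)
  have hN := K.sub_starProjection_mem_orthogonal G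
  refine ⟨x, y, ?_, ?_⟩ <;> rw [hxy] <;>
    exact (Submodule.mem_orthogonal' _ _).1 hN _ (Submodule.subset_span (by simp))

theorem exists_inner_smul_add_inner_smul_add_mem_span_singleton {l m : E}
    (hind : LinearIndependent ℝ ![l, m]) (hnorm : ‖l‖ ≠ ‖m‖) (G : E) :
    ∃ X Y : E, ⟪X, l⟫ = 0 ∧ ⟪Y, m⟫ = 0 ∧ ⟪m, X⟫ • Y + ⟪l, Y⟫ • X + G ∈ ℝ ∙ (l + m) := by
  obtain ⟨x, y, hNl, hNm⟩ := exists_inner_sub_smul_add_smul_eq_zero l m G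
  set N := G - (x • l + y • m) with hN
  set a := ‖l‖ ^ 2
  set b := ‖m‖ ^ 2
  set t := ⟪l, m⟫
  set D := a * b - t ^ 2
  have hD : D ≠ 0 := (sub_pos.2 (sq_real_inner_lt_of_linearIndependent hind)).ne'
  have hab : b - a ≠ 0 := sub_ne_zero.2 fun h => hnorm <| by
    simpa using (pow_left_inj₀ (norm_nonneg l) (norm_nonneg m) two_ne_zero).1 h.symm
  set s := (y - x) / (D * (b - a))
  have hs : s * D * (b - a) = y - x := by simp only [s]; field_simp
  have hll : ⟪l, l⟫ = a := real_inner_self_eq_norm_sq l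
  have hmm : ⟪m, m⟫ = b := real_inner_self_eq_norm_sq m
  have hml : ⟪m, l⟫ = t := real_inner_comm l m
  refine ⟨a • m - t • l, s • (b • l - t • m) - D⁻¹ • N, ?_, ?_, ?_⟩
  · simp only [inner_sub_left, real_inner_smul_left, hll, hml]
    ring
  · simp only [inner_sub_left, real_inner_smul_left, hmm, hNm]
    ring
  have hmX : ⟪m, a • m - t • l⟫ = D := by
    simp only [inner_sub_right, real_inner_smul_right, hmm, hml, D]
    ring
  have hlY : ⟪l, s • (b • l - t • m) - D⁻¹ • N⟫ = s * D := by
    simp only [inner_sub_right, real_inner_smul_right, hll, real_inner_comm N l, hNl]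
    ring
  rw [hmX, hlY, Submodule.mem_span_singleton]
  refine ⟨s * D * (b - t) + x, ?_⟩
  rw [hN]
  match_scalars <;> field_simp
  · ring
  · linear_combination hs
  · ring

end

theorem Pk_eq_starProjection (k : EuclideanSpace ℝ (Fin 3)) :
    Pk k = (ℝ ∙ k)ᗮ.starProjection := by
  ext1 η
  simp [Pk, Submodule.starProjection_singleton]

theorem control_solvability_general
    (k l m G : EuclideanSpace ℝ (Fin 3))
    (hind : LinearIndependent ℝ ![l, m]) (hnorm : ‖l‖ ≠ ‖m‖)
    (hlm : l + m = k) (hG : ⟪G, k⟫ = 0) :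
    ∃ X Y : EuclideanSpace ℝ (Fin 3), ⟪X, l⟫ = 0 ∧ ⟪Y, m⟫ = 0 ∧
      (⟪m, X⟫) • Pk k Y + (⟪l, Y⟫) • Pk k X + (2 : ℝ) • G = 0 := by
  obtain ⟨X, Y, hXl, hYm, hmem⟩ :=
    exists_inner_smul_add_inner_smul_add_mem_span_singleton hind hnorm ((2 : ℝ) • G)
  refine ⟨X, Y, hXl, hYm, ?_⟩
  have h2G : (2 : ℝ) • G ∈ (ℝ ∙ k)ᗮ :=
    Submodule.mem_orthogonal_singleton_iff_inner_left.2 (by rw [real_inner_smul_left, hG, mul_zero])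
  rw [Pk_eq_starProjection, ← Submodule.starProjection_eq_self_iff.2 h2G, ← map_smul, ← map_smul,
    ← map_add, ← map_add]
  exact Submodule.starProjection_orthogonal_apply_eq_zero (hlm ▸ hmem)

/-- Solvability of the single-mode control system: for `l, m` linearly independent
with `|l| ≠ |m|`, `l + m = k ≠ 0`, and any `G ⊥ k`, there exist `X ⊥ l`, `Y ⊥ m` with
`(m·X) P_k Y + (l·Y) P_k X + 2G = 0`. -/
theorem control_solvability
    (k l m G : EuclideanSpace ℝ (Fin 3))
    (hind : LinearIndependent ℝ ![l, m]) (hnorm : ‖l‖ ≠ ‖m‖)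
    (hlm : l + m = k) (hk : k ≠ 0) (hG : ⟪G, k⟫ = 0) :
    ∃ X Y : EuclideanSpace ℝ (Fin 3), ⟪X, l⟫ = 0 ∧ ⟪Y, m⟫ = 0 ∧
      (⟪m, X⟫) • Pk k Y + (⟪l, Y⟫) • Pk k X + (2 : ℝ) • G = 0 :=
  control_solvability_general k l m G hind hnorm hlm hG
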